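/- arXiv:2310.19414 — 10 statements merged into one kernel-verified Lean document; each statement's English description precedes it below -/
import Mathlib

section
/- The map φ : T_{S(I)}(X,P) → S(I) defined by fφ = χ^(f) is a surjective semigroup homomorphism. Moreover, if id_X ∈ T_{S(I)}(X,P), then id_X φ = id_I. -/
open Function Set

/-- `c : I → I` is the character of `f` w.r.t. the partition of `X` whose blocks are
the fibers of `idx : X → I`: the block `X_i = idx⁻¹{i}` is mapped by `f` into `X_{c i}`. -/
def IsChar {X I : Type*} (idx : X → I) (f : X → X) (c : I → I) : Prop :=
  ∀ x, c (idx x) = idx (f x)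

/-- `f` preserves the partition, i.e. `f ∈ T(X,P)`. -/
def PresP {X I : Type*} (idx : X → I) (f : X → X) : Prop :=
  ∃ c, IsChar idx f c

/-- `f ∈ T_{S(I)}(X,P)`: the character of `f` lies in `S`. -/
def InTS {X I : Type*} (idx : X → I) (S : Set (I → I)) (f : X → X) : Prop :=
  ∃ c ∈ S, IsChar idx f c

/-- `α` is a unit of the (sub)monoid `S` of `T(I)`. -/
def IsUnitS {I : Type*} (S : Set (I → I)) (α : I → I) : Prop :=
  α ∈ S ∧ ∃ β ∈ S, (∀ i, β (α i) = i) ∧ (∀ i, α (β i) = i)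

/-- `u` is a unit of the monoid `T_{S(I)}(X,P)`. -/
def IsUnitTS {X I : Type*} (idx : X → I) (S : Set (I → I)) (u : X → X) : Prop :=
  InTS idx S u ∧ ∃ v, InTS idx S v ∧ (∀ x, v (u x) = x) ∧ (∀ x, u (v x) = x)

theorem IsChar.comp {X I : Type*} {idx : X → I} {f g : X → X} {cf cg : I → I}
    (hf : IsChar idx f cf) (hg : IsChar idx g cg) :
    IsChar idx (fun x => g (f x)) (fun i => cg (cf i)) :=
  fun x => (congrArg cg (hf x)).trans (hg (f x))

theorem isChar_id {X I : Type*} (idx : X → I) : IsChar idx (id : X → X) (id : I → I) :=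
  fun _ => rfl

/-- Realise `c` by sending each `x` to a chosen point of the block `X_{c (idx x)}`. -/
theorem exists_isChar_of_surjective {X I : Type*} {idx : X → I} (hsurj : Surjective idx)
    (c : I → I) : ∃ f : X → X, IsChar idx f c := by
  obtain ⟨s, hs⟩ := hsurj.hasRightInverse
  exact ⟨fun x => s (c (idx x)), fun x => (hs _).symm⟩

theorem character_epimorphism_general {X I : Type*} (idx : X → I)
    (hsurj : Function.Surjective idx) (S : Set (I → I)) :
    -- φ is a homomorphism: the character of `fg` is `χ^(f)χ^(g)`
    (∀ f g : X → X, ∀ cf cg : I → I, cf ∈ S → cg ∈ S →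
        IsChar idx f cf → IsChar idx g cg →
        IsChar idx (fun x => g (f x)) (fun i => cg (cf i))) ∧
    -- φ is surjective: every `α ∈ S` is the character of some `f ∈ T_{S(I)}(X,P)`
    (∀ α ∈ S, ∃ f : X → X, IsChar idx f α) ∧
    -- moreover `id_X φ = id_I`
    IsChar idx (id : X → X) (id : I → I) :=
  ⟨fun _ _ _ _ _ _ hf hg => hf.comp hg,
    fun α _ => exists_isChar_of_surjective hsurj α,
    isChar_id idx⟩

theorem character_epimorphism {X I : Type*} (idx : X → I)
    (hsurj : Function.Surjective idx) (S : Set (I → I))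
    (hS : ∀ α ∈ S, ∀ β ∈ S, (fun i => β (α i)) ∈ S) :
    -- φ is a homomorphism: the character of `fg` is `χ^(f)χ^(g)`
    (∀ f g : X → X, ∀ cf cg : I → I, cf ∈ S → cg ∈ S →
        IsChar idx f cf → IsChar idx g cg →
        IsChar idx (fun x => g (f x)) (fun i => cg (cf i))) ∧
    -- φ is surjective: every `α ∈ S` is the character of some `f ∈ T_{S(I)}(X,P)`
    (∀ α ∈ S, ∃ f : X → X, IsChar idx f α) ∧
    -- moreover `id_X φ = id_I`
    IsChar idx (id : X → X) (id : I → I) :=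
  character_epimorphism_general idx hsurj S
end

section
/- Let f ∈ T_{S(I)}(X,P). Then f is a regular element of T_{S(I)}(X,P) (i.e., there exists g ∈ T_{S(I)}(X,P) with fgf = f) if and only if there exists α ∈ S(I) such that (i) χ^(f) α χ^(f) = χ^(f), and (ii) X_i ∩ Xf ⊆ X_{iα} f for all i in the image of χ^(f). -/
open Function Set

/-!
The character of a composite is the composite of the characters, and since every block is
nonempty a map has only one character; so `f g f = f` forces `χ(f) χ(g) χ(f) = χ(f)`, and
`α = χ(g)` satisfies (ii) because `g` sends a point `f z` of `X_i` into `X_{iα}` with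
`f (g (f z)) = f z`. Conversely, (ii) lets one choose for each point `y` of `Xf` a preimage
under `f` in the block `X_{iα}` of `y ∈ X_i`, and send every other point of `X_i` anywhere
into `X_{iα}`; the resulting `g` has character `α` and satisfies `f g f = f`.
-/

namespace IsChar

variable {X I : Type*} {idx : X → I} {f g : X → X} {cf cg : I → I}

theorem comp_s2 (hf : IsChar idx f cf) (hg : IsChar idx g cg) : IsChar idx (f ∘ g) (cf ∘ cg) :=
  fun x => by simp only [comp_apply, hg x, hf (g x)]

theorem unique (hsurj : Surjective idx) (hc : IsChar idx f cf) (hd : IsChar idx f cg) :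
    cf = cg :=
  funext <| hsurj.forall.2 fun x => (hc x).trans (hd x).symm

theorem idx_mem_range (hf : IsChar idx f cf) {y : X} (hy : y ∈ range f) : idx y ∈ range cf := by
  obtain ⟨x, rfl⟩ := hy
  exact ⟨idx x, hf x⟩

theorem mapsTo_fiber (hf : IsChar idx f cf) (i : I) :
    MapsTo f (idx ⁻¹' {i}) (idx ⁻¹' {cf i}) := by
  rintro x rfl
  exact (hf x).symm

end IsChar

theorem exists_isChar_rightInvOn {X I : Type*} {idx : X → I} (hsurj : Surjective idx)
    {f : X → X} {α : I → I} {t : Set X} (ht : ∀ y ∈ t, y ∈ f '' (idx ⁻¹' {α (idx y)})) :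
    ∃ g, IsChar idx g α ∧ RightInvOn g f t := by
  have hpick : ∀ y, ∃ w, idx w = α (idx y) ∧ (y ∈ t → f w = y) := by
    intro y
    by_cases hy : y ∈ t
    · obtain ⟨w, hw, hfw⟩ := ht y hy
      exact ⟨w, hw, fun _ => hfw⟩
    · obtain ⟨w, hw⟩ := hsurj (α (idx y))
      exact ⟨w, hw, fun h => absurd h hy⟩
  choose g hg hfg using hpick
  exact ⟨g, fun y => (hg y).symm, hfg⟩

theorem regular_element_iff_general {X I : Type*} (idx : X → I)
    (hsurj : Function.Surjective idx) (S : Set (I → I))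
    (f : X → X) (cf : I → I) (hf : IsChar idx f cf) :
    (∃ g, InTS idx S g ∧ ∀ x, f (g (f x)) = f x) ↔
      ∃ α ∈ S, (∀ i, cf (α (cf i)) = cf i) ∧
        ∀ i ∈ Set.range cf, idx ⁻¹' {i} ∩ Set.range f ⊆ f '' (idx ⁻¹' {α i}) := by
  constructor
  · rintro ⟨g, ⟨cg, hcgS, hcg⟩, hfgf⟩
    have hchar : IsChar idx (f ∘ g ∘ f) (cf ∘ cg ∘ cf) := (hf.comp_s2 hcg).comp_s2 hf
    rw [show f ∘ g ∘ f = f from funext hfgf] at hchar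
    refine ⟨cg, hcgS, fun i => congrFun (hchar.unique hsurj hf) i, ?_⟩
    rintro i - y ⟨hy, z, rfl⟩
    exact ⟨g (f z), hcg.mapsTo_fiber i hy, hfgf z⟩
  · rintro ⟨α, hαS, -, hα⟩
    obtain ⟨g, hg, hfg⟩ := exists_isChar_rightInvOn hsurj (t := range f)
      fun y hy => hα _ (hf.idx_mem_range hy) ⟨rfl, hy⟩
    exact ⟨g, ⟨α, hαS, hg⟩, fun x => hfg (mem_range_self x)⟩

theorem regular_element_iff {X I : Type*} (idx : X → I)
    (hsurj : Function.Surjective idx) (S : Set (I → I))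
    (hS : ∀ α ∈ S, ∀ β ∈ S, (fun i => β (α i)) ∈ S)
    (f : X → X) (cf : I → I) (hf : IsChar idx f cf) (hcf : cf ∈ S) :
    (∃ g, InTS idx S g ∧ ∀ x, f (g (f x)) = f x) ↔
      ∃ α ∈ S, (∀ i, cf (α (cf i)) = cf i) ∧
        ∀ i ∈ Set.range cf, idx ⁻¹' {i} ∩ Set.range f ⊆ f '' (idx ⁻¹' {α i}) :=
  regular_element_iff_general idx hsurj S f cf hf
end

section
/- Let f ∈ T(X,P). Then f is regular in T(X,P) if and only if for every i ∈ I there exists j ∈ I such that X_i ∩ Xf ⊆ X_j f. -/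
open Function Set

section

variable {X I : Type*} {idx : X → I} {f g : X → X} {c : I → I}

theorem IsChar.inter_range_subset_image (hg : IsChar idx g c)
    (hfgf : ∀ x, f (g (f x)) = f x) (i : I) :
    idx ⁻¹' {i} ∩ range f ⊆ f '' (idx ⁻¹' {c i}) := by
  rintro _ ⟨hi, x, rfl⟩
  refine ⟨g (f x), ?_, hfgf x⟩
  rw [mem_preimage, mem_singleton_iff] at hi ⊢
  rw [← hg, hi]

theorem exists_isChar_of_inter_range_subset_image (hsurj : Surjective idx)
    (h : ∀ i, idx ⁻¹' {i} ∩ range f ⊆ f '' (idx ⁻¹' {c i})) :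
    ∃ g, IsChar idx g c ∧ ∀ x, f (g (f x)) = f x := by
  have hpoint : ∀ y, ∃ w, idx w = c (idx y) ∧ (y ∈ range f → f w = y) := by
    intro y
    by_cases hy : y ∈ range f
    · obtain ⟨w, hw, hfw⟩ := h (idx y) ⟨rfl, hy⟩
      exact ⟨w, hw, fun _ => hfw⟩
    · obtain ⟨w, hw⟩ := hsurj (c (idx y))
      exact ⟨w, hw, fun hy' => absurd hy' hy⟩
  choose g hg_idx hg_section using hpoint
  exact ⟨g, fun y => (hg_idx y).symm, fun x => hg_section (f x) (mem_range_self x)⟩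

end

theorem regular_element_TXP_iff_general {X I : Type*} (idx : X → I)
    (hsurj : Function.Surjective idx) (f : X → X) :
    (∃ g, PresP idx g ∧ ∀ x, f (g (f x)) = f x) ↔
      ∀ i : I, ∃ j : I, idx ⁻¹' {i} ∩ Set.range f ⊆ f '' (idx ⁻¹' {j}) := by
  constructor
  · rintro ⟨g, ⟨c, hc⟩, hfgf⟩ i
    exact ⟨c i, hc.inter_range_subset_image hfgf i⟩
  · intro h
    choose c hc using h
    obtain ⟨g, hg, hfgf⟩ := exists_isChar_of_inter_range_subset_image hsurj hc
    exact ⟨g, ⟨c, hg⟩, hfgf⟩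

theorem regular_element_TXP_iff {X I : Type*} (idx : X → I)
    (hsurj : Function.Surjective idx) (f : X → X) (hfP : PresP idx f) :
    (∃ g, PresP idx g ∧ ∀ x, f (g (f x)) = f x) ↔
      ∀ i : I, ∃ j : I, idx ⁻¹' {i} ∩ Set.range f ⊆ f '' (idx ⁻¹' {j}) :=
  regular_element_TXP_iff_general idx hsurj f
end

section
/- The semigroup T_{S(I)}(X,P) is regular if and only if (i) S(I) is a regular semigroup, and (ii) for each α ∈ S(I), whenever there exists i ∈ I with |i α^{-1}| ≥ 2, the block X_i is a singleton. -/
open Function Set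

/-!
If `f` has character `α` and `α β α = α`, a partner `g` of `f` with character `β` only has to send
each `f x` to a point of the block `X_{βα(i)}`, `i` the block of `x`, that `f` maps back to `f x`.
When `βα(i) = i` the point `x` itself works; otherwise `α` identifies `i` with `βα(i)`, so by (ii)
the block of `f x` is a singleton and any point works. Conversely, the maps `F ∘ idx` realise every
character, with arbitrary values `F j`, `F k` on two blocks that `α` identifies. Regularity of such
a map gives (i), and, as `f g` fixes the image of `f` and is constant on blocks, also (ii).
-/

section

variable {X I : Type*} {idx : X → I} {f g : X → X} {α β : I → I}

namespace IsChar

lemma of_comp_idx {F : I → X} (hF : ∀ m, idx (F m) = α m) :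
    IsChar idx (fun y => F (idx y)) α :=
  fun y => (hF (idx y)).symm

lemma apply_apply_apply_eq (hsurj : Surjective idx) (hf : IsChar idx f α)
    (hg : IsChar idx g β) (hfgf : ∀ x, f (g (f x)) = f x) (i : I) : α (β (α i)) = α i := by
  obtain ⟨x, rfl⟩ := hsurj i
  rw [hf, hg, hf, hfgf]

end IsChar

lemma eq_of_mem_range_of_idx_eq (hf : ∀ x y, idx x = idx y → f x = f y)
    (hg : IsChar idx g β) (hfgf : ∀ x, f (g (f x)) = f x) {y₁ y₂ : X}
    (h₁ : y₁ ∈ range f) (h₂ : y₂ ∈ range f) (h : idx y₁ = idx y₂) : y₁ = y₂ := by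
  obtain ⟨a, rfl⟩ := h₁
  obtain ⟨b, rfl⟩ := h₂
  rw [← hfgf a, ← hfgf b]
  exact hf _ _ (by rw [← hg, ← hg, h])

lemma exists_section_eq_of_ne (hsurj : Surjective idx) {j k : I} (hjk : j ≠ k)
    {x₁ x₂ : X} (h₁ : idx x₁ = α j) (h₂ : idx x₂ = α k) :
    ∃ F : I → X, (∀ m, idx (F m) = α m) ∧ F j = x₁ ∧ F k = x₂ := by
  classical
  refine ⟨update (update (fun m => surjInv hsurj (α m)) j x₁) k x₂, fun m => ?_,
    by simp [hjk], by simp⟩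
  rcases eq_or_ne m k with rfl | hk
  · simpa
  rcases eq_or_ne m j with rfl | hj
  · simpa [hk]
  simp [hk, hj, surjInv_eq]

lemma exists_isChar_and_regular (hsurj : Surjective idx) (hf : IsChar idx f α)
    (hβ : ∀ x, ∃ z, idx z = β (α (idx x)) ∧ f z = f x) :
    ∃ g, IsChar idx g β ∧ ∀ x, f (g (f x)) = f x := by
  have : ∀ y, ∃ z, idx z = β (idx y) ∧ (y ∈ range f → f z = y) := by
    intro y
    by_cases hy : y ∈ range f
    · obtain ⟨x, rfl⟩ := hy
      obtain ⟨z, hz, hfz⟩ := hβ x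
      exact ⟨z, by rw [hz, hf], fun _ => hfz⟩
    · exact ⟨surjInv hsurj (β (idx y)), surjInv_eq hsurj _, fun h => absurd h hy⟩
  choose g hg using this
  exact ⟨g, fun y => (hg y).1.symm, fun x => (hg (f x)).2 ⟨x, rfl⟩⟩

lemma exists_idx_eq_and_apply_eq (hsurj : Surjective idx) (hf : IsChar idx f α)
    (hβα : ∀ i, α (β (α i)) = α i)
    (hsing : ∀ i, (∃ j k, j ≠ k ∧ α j = i ∧ α k = i) → (idx ⁻¹' {i}).Subsingleton) (x : X) :
    ∃ z, idx z = β (α (idx x)) ∧ f z = f x := by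
  by_cases hfix : β (α (idx x)) = idx x
  · exact ⟨x, hfix.symm, rfl⟩
  refine ⟨surjInv hsurj _, surjInv_eq hsurj _,
    hsing (α (idx x)) ⟨_, _, hfix, hβα _, rfl⟩ ?_ (hf x).symm⟩
  show idx (f _) = α (idx x)
  rw [← hf, surjInv_eq hsurj, hβα]

end

theorem regular_semigroup_iff_general {X I : Type*} (idx : X → I)
    (hsurj : Function.Surjective idx) (S : Set (I → I)) :
    (∀ f, InTS idx S f → ∃ g, InTS idx S g ∧ ∀ x, f (g (f x)) = f x) ↔
      ((∀ α ∈ S, ∃ β ∈ S, ∀ i, α (β (α i)) = α i) ∧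
       (∀ α ∈ S, ∀ i : I, (∃ j k, j ≠ k ∧ α j = i ∧ α k = i) →
          (idx ⁻¹' {i}).Subsingleton)) := by
  constructor
  · intro hreg
    refine ⟨fun α hα => ?_, fun α hα i ⟨j, k, hjk, hj, hk⟩ x₁ hx₁ x₂ hx₂ => ?_⟩
    · have hf := IsChar.of_comp_idx (fun m => surjInv_eq hsurj (α m))
      obtain ⟨g, ⟨β, hβ, hg⟩, hfgf⟩ := hreg _ ⟨α, hα, hf⟩
      exact ⟨β, hβ, hf.apply_apply_apply_eq hsurj hg hfgf⟩
    · obtain ⟨F, hF, hFj, hFk⟩ := exists_section_eq_of_ne hsurj hjk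
        (hx₁.trans hj.symm) (hx₂.trans hk.symm)
      obtain ⟨g, ⟨β, -, hg⟩, hfgf⟩ := hreg _ ⟨α, hα, IsChar.of_comp_idx hF⟩
      have hrange : range (fun y => F (idx y)) = range F := hsurj.range_comp F
      exact eq_of_mem_range_of_idx_eq (fun _ _ h => congrArg F h) hg hfgf
        (hrange ▸ ⟨j, hFj⟩) (hrange ▸ ⟨k, hFk⟩) (hx₁.trans hx₂.symm)
  · rintro ⟨hregS, hsing⟩ f ⟨α, hα, hf⟩
    obtain ⟨β, hβ, hβα⟩ := hregS α hα
    obtain ⟨g, hg, hfgf⟩ :=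
      exists_isChar_and_regular hsurj hf (exists_idx_eq_and_apply_eq hsurj hf hβα (hsing α hα))
    exact ⟨g, ⟨β, hβ, hg⟩, hfgf⟩

theorem regular_semigroup_iff {X I : Type*} (idx : X → I)
    (hsurj : Function.Surjective idx) (S : Set (I → I))
    (hS : ∀ α ∈ S, ∀ β ∈ S, (fun i => β (α i)) ∈ S) :
    (∀ f, InTS idx S f → ∃ g, InTS idx S g ∧ ∀ x, f (g (f x)) = f x) ↔
      ((∀ α ∈ S, ∃ β ∈ S, ∀ i, α (β (α i)) = α i) ∧
       (∀ α ∈ S, ∀ i : I, (∃ j k, j ≠ k ∧ α j = i ∧ α k = i) →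
          (idx ⁻¹' {i}).Subsingleton)) :=
  regular_semigroup_iff_general idx hsurj S
end

section
/- If S(I) is a subgroup of the symmetric group Sym(I), then the semigroup T_{S(I)}(X,P) is regular. -/
open Function Set

/-! Let `f` have character `c ∈ S(I)`, with inverse `β ∈ S(I)`. An inner inverse `g` of `f` is
obtained by sending each point of the image of `f` to one of its preimages and every other point
`y ∈ X_j` to an arbitrary point of the (nonempty) block `X_{β j}`. Since `c` is injective, the
preimages of `y ∈ X_j` all lie in `X_{β j}` as well, so `g` has character `β` and lies in
`T_{S(I)}(X,P)`. -/

namespace Function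

variable {α β γ : Type*}

theorem extend_comp_self (f : α → β) (e : β → γ) : extend f (e ∘ f) e = e := by
  funext b
  by_cases hb : ∃ a, f a = b
  · obtain ⟨a, rfl⟩ := hb
    exact FactorsThrough.extend_apply (fun _ _ h => congrArg e h) e a
  · exact extend_apply' _ _ _ hb

theorem apply_extend_id_apply (f : α → β) (e : β → α) (a : α) :
    f (extend f id e (f a)) = f a := by
  rw [apply_extend f]
  exact FactorsThrough.extend_apply (fun _ _ h => h) _ a

end Function

section Character

variable {X I : Type*} {idx : X → I}

theorem IsChar.comp_comp_eq_of_leftInverse {f : X → X} {c β : I → I} (hc : IsChar idx f c)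
    (hβ : LeftInverse β c) : β ∘ idx ∘ f = idx :=
  funext fun x => by rw [comp_apply, comp_apply, ← hc x, hβ]

theorem isChar_surjInv_comp (hsurj : Surjective idx) (β : I → I) :
    IsChar idx (surjInv hsurj ∘ β ∘ idx) β :=
  fun _ => (surjInv_eq hsurj _).symm

theorem IsChar.extend_id {f e : X → X} {c β : I → I} (hc : IsChar idx f c)
    (hβ : LeftInverse β c) (he : IsChar idx e β) : IsChar idx (extend f id e) β := by
  intro y
  have he' : idx ∘ e = β ∘ idx := funext fun x => (he x).symm
  calc β (idx y) = extend f ((β ∘ idx) ∘ f) (β ∘ idx) y := by rw [extend_comp_self]; rfl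
    _ = extend f (idx ∘ id) (idx ∘ e) y := by
      rw [he', comp_id, comp_assoc, hc.comp_comp_eq_of_leftInverse hβ]
    _ = idx (extend f id e y) := (apply_extend idx f e y).symm

end Character

theorem regular_of_subgroup_general {X I : Type*} (idx : X → I)
    (hsurj : Function.Surjective idx) (S : Set (I → I))
    (hinv : ∀ α ∈ S, ∃ β ∈ S, (∀ i, β (α i) = i) ∧ (∀ i, α (β i) = i)) :
    ∀ f, InTS idx S f → ∃ g, InTS idx S g ∧ ∀ x, f (g (f x)) = f x := by
  rintro f ⟨c, hcS, hc⟩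
  obtain ⟨β, hβS, hβc, -⟩ := hinv c hcS
  exact ⟨extend f id (surjInv hsurj ∘ β ∘ idx),
    ⟨β, hβS, hc.extend_id hβc (isChar_surjInv_comp hsurj β)⟩, apply_extend_id_apply f _⟩

theorem regular_of_subgroup {X I : Type*} (idx : X → I)
    (hsurj : Function.Surjective idx) (S : Set (I → I))
    (hS : ∀ α ∈ S, ∀ β ∈ S, (fun i => β (α i)) ∈ S)
    (hid : (id : I → I) ∈ S)
    (hinv : ∀ α ∈ S, ∃ β ∈ S, (∀ i, β (α i) = i) ∧ (∀ i, α (β i) = i)) :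
    ∀ f, InTS idx S f → ∃ g, InTS idx S g ∧ ∀ x, f (g (f x)) = f x :=
  regular_of_subgroup_general idx hsurj S hinv
end

section
/- The semigroup T(X,P) is regular if and only if the partition P is trivial (i.e., all blocks are singletons, or there is a single block). -/
open Function Set

/-!
If `P` is trivial, every self-map of `X` preserves `P`, so `T(X,P)` is the full transformation
monoid, which is regular. Otherwise pick `a ≠ b` in one block and `z` outside it, and let `f`
send the block of `a` to `a` and everything else to `b`. Any `g` with `f g f = f` must send
`a = f a` back into the block of `a` and `b = f z` out of it, so `g` splits the block of `a`.
-/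

theorem Function.exists_apply_apply_apply_eq {α : Type*} (f : α → α) :
    ∃ g : α → α, ∀ a, f (g (f a)) = f a := by
  rcases isEmpty_or_nonempty α with hα | hα
  · exact ⟨id, isEmptyElim⟩
  · exact ⟨invFun f, fun a => invFun_eq ⟨a, rfl⟩⟩

section PresP

variable {X I : Type*} (idx : X → I)

theorem presP_of_subsingleton_fibers (hsing : ∀ i, (idx ⁻¹' {i}).Subsingleton) (f : X → X) :
    PresP idx f := by
  have hinj : Injective idx := fun u v huv => hsing (idx v) huv rfl
  exact ⟨extend idx (idx ∘ f) id, fun x => hinj.extend_apply _ _ x⟩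

theorem presP_of_forall_eq (hconst : ∀ x y, idx x = idx y) (f : X → X) : PresP idx f :=
  ⟨id, fun x => hconst x (f x)⟩

theorem exists_presP_forall_presP_not_regular {a b z : X} (hab : idx a = idx b) (hne : a ≠ b)
    (hz : idx z ≠ idx a) :
    ∃ f, PresP idx f ∧ ∀ g, PresP idx g → ¬ ∀ x, f (g (f x)) = f x := by
  classical
  let f : X → X := fun w => if idx w = idx a then a else b
  have hf : PresP idx f := ⟨fun j => if j = idx a then idx a else idx b, fun w => by
    by_cases h : idx w = idx a <;> simp [f, h]⟩
  refine ⟨f, hf, fun g ⟨c, hc⟩ hfgf => ?_⟩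
  have hga : idx (g a) = idx a := by
    by_contra h
    have := hfgf a
    simp only [f, if_pos rfl, if_neg h] at this
    exact hne this.symm
  have hgb : idx (g b) ≠ idx a := by
    intro h
    have := hfgf z
    simp only [f, if_neg hz, if_pos h] at this
    exact hne this
  exact hgb (by rw [← hc, ← hab, hc, hga])

end PresP

theorem TXP_regular_iff_trivial_general {X I : Type*} (idx : X → I) :
    (∀ f : X → X, PresP idx f → ∃ g, PresP idx g ∧ ∀ x, f (g (f x)) = f x) ↔
      ((∀ i : I, (idx ⁻¹' {i}).Subsingleton) ∨ (∀ x y : X, idx x = idx y)) := by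
  constructor
  · intro hreg
    by_contra hcon
    push Not at hcon
    obtain ⟨⟨i, a, ha, b, hb, hne⟩, x, y, hxy⟩ := hcon
    obtain ⟨z, hz⟩ : ∃ z, idx z ≠ idx a := by
      by_cases hx : idx x = idx a
      · exact ⟨y, hx ▸ Ne.symm hxy⟩
      · exact ⟨x, hx⟩
    obtain ⟨f, hf, hnot⟩ := exists_presP_forall_presP_not_regular idx (ha.trans hb.symm) hne hz
    obtain ⟨g, hg, hfgf⟩ := hreg f hf
    exact hnot g hg hfgf
  · rintro htriv f -
    obtain ⟨g, hfgf⟩ := exists_apply_apply_apply_eq f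
    refine ⟨g, ?_, hfgf⟩
    rcases htriv with hsing | hconst
    · exact presP_of_subsingleton_fibers idx hsing g
    · exact presP_of_forall_eq idx hconst g

theorem TXP_regular_iff_trivial {X I : Type*} [Nonempty X] (idx : X → I)
    (hsurj : Function.Surjective idx) :
    (∀ f : X → X, PresP idx f → ∃ g, PresP idx g ∧ ∀ x, f (g (f x)) = f x) ↔
      ((∀ i : I, (idx ⁻¹' {i}).Subsingleton) ∨ (∀ x y : X, idx x = idx y)) :=
  TXP_regular_iff_trivial_general idx
end

section
/- Assume id_I ∈ S(I). The semigroup T_{S(I)}(X,P) is unit-regular if and only if: (i) S(I) is unit-regular; (ii) for each unit α of S(I), |X_i| = |X_{iα}| for all i ∈ I; (iii) every block X_i is finite; and (iv) for each β ∈ S(I), whenever |i β^{-1}| ≥ 2 for some i ∈ I, the block X_i is a singleton. -/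
/-! A unit `u` of `T_{S(I)}(X,P)` is a bijection of `X` whose character `γ` is a unit of `S(I)`,
so it maps every block bijectively onto a block, and `f u f = f` descends to `β γ β = β` on
characters. Testing regularity on maps that are constant on blocks gives (i), (ii) and (iv); an
injective, non-surjective self-map of an infinite block, extended by the identity, admits no unit
`u` with `f u f = f`, which gives (iii).

Conversely, let `f` have character `β` and let `α` be a unit with `β α β = β`. Every `y = f x`
has a preimage in the block `X_{α (idx y)}`: `x` itself when `α β` fixes `idx x`, and any point of
that block otherwise, by (iv). These choices are injective, so by (ii) and (iii) they extend to
bijections `X_j → X_{α j}`, which glue to a unit `u` with `f u f = f`. -/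

open Function Set

/-- `T_{S(I)}(X,P)` is unit-regular. -/
def IsUnitRegular {X I : Type*} (idx : X → I) (S : Set (I → I)) : Prop :=
  ∀ f, InTS idx S f → ∃ u, IsUnitTS idx S u ∧ ∀ x, f (u (f x)) = f x

theorem finite_of_forall_injective_surjective {A : Type*}
    (h : ∀ g : A → A, Injective g → Surjective g) : Finite A := by
  by_contra hA
  rw [not_finite_iff_infinite] at hA
  obtain ⟨e⟩ : Nonempty (Option A ≃ A) :=
    Cardinal.eq.1 (Cardinal.mk_option.trans (Cardinal.add_one_eq (Cardinal.aleph0_le_mk A)))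
  obtain ⟨a, ha⟩ := h (e ∘ some) (e.injective.comp (Option.some_injective A)) (e none)
  exact Option.some_ne_none a (e.injective ha)

theorem exists_equiv_eqOn_of_injOn {A B : Type*} [Finite A] (e : A ≃ B) {s : Set A} {p : A → B}
    (hp : InjOn p s) : ∃ g : A ≃ B, EqOn g p s := by
  have := Fintype.ofFinite A
  have := Fintype.ofEquiv A e
  obtain ⟨g, hg⟩ := MapsTo.exists_equiv_extend_of_card_eq (t := Finset.univ)
    (by rw [Finset.card_univ, Fintype.card_congr e]) (fun _ _ => by simp) hp
  exact ⟨g.trans (Equiv.subtypeUnivEquiv Finset.mem_univ), hg⟩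

theorem IsUnitS.injective {I : Type*} {S : Set (I → I)} {α : I → I} (h : IsUnitS S α) :
    Injective α := by
  obtain ⟨-, β, -, hβα, -⟩ := h
  exact LeftInverse.injective hβα

theorem IsUnitS.exists_equiv {I : Type*} {S : Set (I → I)} {α : I → I} (h : IsUnitS S α) :
    ∃ a : I ≃ I, ⇑a = α := by
  obtain ⟨-, β, -, hβα, hαβ⟩ := h
  exact ⟨⟨α, β, hβα, hαβ⟩, rfl⟩

section

variable {X I : Type*} {idx : X → I} {S : Set (I → I)}

theorem IsChar.regular (hsurj : Surjective idx) {f u : X → X} {c γ : I → I}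
    (hf : IsChar idx f c) (hu : IsChar idx u γ) (hfu : ∀ x, f (u (f x)) = f x) (i : I) :
    c (γ (c i)) = c i := by
  obtain ⟨x, rfl⟩ := hsurj i
  rw [hf, hu, hf, hfu]

theorem IsChar.mk_fiber_eq {u : X → X} {γ : I → I} (hu : Bijective u) (hγ : Injective γ)
    (h : IsChar idx u γ) (i : I) :
    Cardinal.mk ↥(idx ⁻¹' {i}) = Cardinal.mk ↥(idx ⁻¹' {γ i}) :=
  Cardinal.mk_congr <| (Equiv.ofBijective u hu).subtypeEquiv fun x => by
    simp [← h x, hγ.eq_iff]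

theorem IsUnitTS.bijective {u : X → X} (h : IsUnitTS idx S u) : Bijective u := by
  obtain ⟨-, v, -, hvu, huv⟩ := h
  exact ⟨LeftInverse.injective hvu, RightInverse.surjective huv⟩

theorem IsUnitTS.exists_isUnitS (hsurj : Surjective idx) {u : X → X} (h : IsUnitTS idx S u) :
    ∃ γ, IsUnitS S γ ∧ IsChar idx u γ := by
  obtain ⟨⟨γ, hγS, hγ⟩, v, ⟨δ, hδS, hδ⟩, hvu, huv⟩ := h
  refine ⟨γ, ⟨hγS, δ, hδS, fun i => ?_, fun i => ?_⟩, hγ⟩ <;> obtain ⟨x, rfl⟩ := hsurj i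
  · rw [hγ, hδ, hvu]
  · rw [hδ, hγ, huv]

theorem isUnitTS_of_equiv (u : X ≃ X) {γ : I → I} (hγ : IsUnitS S γ) (hu : IsChar idx u γ) :
    IsUnitTS idx S u := by
  obtain ⟨hγS, δ, hδS, hδγ, -⟩ := hγ
  refine ⟨⟨γ, hγS, hu⟩, u.symm, ⟨δ, hδS, fun y => ?_⟩, u.symm_apply_apply, u.apply_symm_apply⟩
  conv_lhs => rw [← u.apply_symm_apply y, ← hu, hδγ]

theorem exists_equiv_isChar_of_fiberwise (α : I ≃ I)
    (e : ∀ j, {x // idx x = j} ≃ {x // idx x = α j}) :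
    ∃ u : X ≃ X, IsChar idx u α ∧ ∀ x, u x = e (idx x) ⟨x, rfl⟩ :=
  ⟨(Equiv.sigmaFiberEquiv idx).symm.trans
      ((Equiv.sigmaCongr α e).trans (Equiv.sigmaFiberEquiv idx)),
    fun x => (e (idx x) ⟨x, rfl⟩).2.symm, fun _ => rfl⟩

namespace IsUnitRegular

theorem exists_isUnitS_regular (hsurj : Surjective idx) (hreg : IsUnitRegular idx S)
    {β : I → I} (hβ : β ∈ S) :
    ∃ γ, IsUnitS S γ ∧ (∀ i, β (γ (β i)) = β i) ∧
      ∀ i, Cardinal.mk ↥(idx ⁻¹' {i}) = Cardinal.mk ↥(idx ⁻¹' {γ i}) := by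
  obtain ⟨s, hs⟩ := hsurj.hasRightInverse
  have hf : IsChar idx (fun x => s (β (idx x))) β := fun x => (hs _).symm
  obtain ⟨u, hu, hfu⟩ := hreg _ ⟨β, hβ, hf⟩
  obtain ⟨γ, hγ, hγu⟩ := hu.exists_isUnitS hsurj
  exact ⟨γ, hγ, hf.regular hsurj hγu hfu, hγu.mk_fiber_eq hu.bijective hγ.injective⟩

theorem mk_fiber_eq (hsurj : Surjective idx) (hreg : IsUnitRegular idx S) {α : I → I}
    (hα : IsUnitS S α) (i : I) :
    Cardinal.mk ↥(idx ⁻¹' {i}) = Cardinal.mk ↥(idx ⁻¹' {α i}) := by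
  obtain ⟨γ, -, hαγα, hcard⟩ := hreg.exists_isUnitS_regular hsurj hα.1
  have hγα : γ (α i) = i := hα.injective (hαγα i)
  rw [hcard (α i), hγα]

theorem surjective_of_injective (hsurj : Surjective idx) (hreg : IsUnitRegular idx S)
    (hid : (id : I → I) ∈ S) {i : I} {h : idx ⁻¹' {i} → idx ⁻¹' {i}} (hinj : Injective h) :
    Surjective h := by
  classical
  let f : X → X := fun x => if hx : idx x = i then h ⟨x, hx⟩ else x
  have hfh (a : idx ⁻¹' {i}) : f a = h a := dif_pos a.2
  have hf : IsChar idx f id := fun x => by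
    by_cases hx : idx x = i
    · simpa [f, hx] using (h ⟨x, hx⟩).2.symm
    · simp [f, hx]
  obtain ⟨u, hu, hfu⟩ := hreg f ⟨id, hid, hf⟩
  obtain ⟨γ, -, hγu⟩ := hu.exists_isUnitS hsurj
  have hγi : γ i = i := hf.regular hsurj hγu hfu i
  have hui (a : idx ⁻¹' {i}) : idx (u a) = i := by
    rw [← hγu, show idx (a : X) = i from a.2, hγi]
  let u' : idx ⁻¹' {i} → idx ⁻¹' {i} := fun a => ⟨u a, hui a⟩
  have hu' : Injective u' := fun a b hab => Subtype.ext (hu.bijective.1 (congrArg Subtype.val hab))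
  have hu'h : LeftInverse u' h := fun a => hinj <| Subtype.ext <|
    calc (h (u' (h a)) : X) = f (u (h a)) := (hfh _).symm
      _ = h a := by rw [← hfh, hfu]
  exact (hu'h.rightInverse_of_injective hu').surjective

theorem finite_fiber (hsurj : Surjective idx) (hreg : IsUnitRegular idx S)
    (hid : (id : I → I) ∈ S) (i : I) : (idx ⁻¹' {i}).Finite :=
  Set.finite_coe_iff.1 <| finite_of_forall_injective_surjective fun _ hinj =>
    hreg.surjective_of_injective hsurj hid hinj

theorem subsingleton_fiber (hsurj : Surjective idx) (hreg : IsUnitRegular idx S)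
    {β : I → I} (hβ : β ∈ S) {i : I}
    (h : ∃ j k, j ≠ k ∧ β j = i ∧ β k = i) : (idx ⁻¹' {i}).Subsingleton := by
  classical
  obtain ⟨j, k, hjk, hj, hk⟩ := h
  intro a ha b hb
  obtain ⟨s, hs⟩ := hsurj.hasRightInverse
  -- `x ↦ g (idx x)` is constant on blocks and `u` sends `a` and `b` into one block, while
  -- regularity at `s j` and `s k` forces `g (idx (u a)) = a` and `g (idx (u b)) = b`.
  let g : I → X := update (update (fun l => s (β l)) j a) k b
  have hg (l : I) : idx (g l) = β l := by
    by_cases hlk : l = k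
    · subst hlk; simpa [g, hk] using hb
    by_cases hlj : l = j
    · subst hlj; simpa [g, hlk, hj] using ha
    simp [g, hlk, hlj, hs (β l)]
  obtain ⟨u, hu, hfu⟩ := hreg (fun x => g (idx x)) ⟨β, hβ, fun x => (hg _).symm⟩
  obtain ⟨γ, -, hγu⟩ := hu.exists_isUnitS hsurj
  have hua : g (idx (u a)) = a := by
    simpa only [hs j, g, update_of_ne hjk, update_self] using hfu (s j)
  have hub : g (idx (u b)) = b := by simpa only [hs k, g, update_self] using hfu (s k)
  rw [← hua, ← hub, ← hγu, ← hγu, show idx a = idx b from ha.trans hb.symm]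

end IsUnitRegular

theorem IsChar.exists_mem_fiber_apply_eq (hsurj : Surjective idx) {f : X → X} {α β : I → I}
    (hf : IsChar idx f β) (hβαβ : ∀ i, β (α (β i)) = β i)
    (hsing : ∀ i, (∃ j k, j ≠ k ∧ β j = i ∧ β k = i) → (idx ⁻¹' {i}).Subsingleton) (y : X) :
    ∃ z, idx z = α (idx y) ∧ (y ∈ range f → f z = y) := by
  obtain ⟨z, hz⟩ := hsurj (α (idx y))
  by_cases hy : y ∈ range f
  swap
  · exact ⟨z, hz, fun h => absurd h hy⟩
  obtain ⟨x, rfl⟩ := hy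
  by_cases hx : α (idx (f x)) = idx x
  · exact ⟨x, hx.symm, fun _ => rfl⟩
  -- `α (idx (f x))` and `idx x` are distinct `β`-preimages of `idx (f x)`, so that block is a
  -- singleton and every `z` in the block `α (idx (f x))` is sent to `f x`.
  have hβα : β (α (idx (f x))) = idx (f x) := by rw [← hf x, hβαβ]
  refine ⟨z, hz, fun _ => hsing _ ⟨_, _, hx, hβα, hf x⟩ ?_ rfl⟩
  change idx (f z) = idx (f x)
  rw [← hf z, hz, hβα]

theorem isUnitRegular_of_fiber_conditions (hsurj : Surjective idx)
    (hSreg : ∀ β ∈ S, ∃ α, IsUnitS S α ∧ ∀ i, β (α (β i)) = β i)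
    (hcard : ∀ α, IsUnitS S α → ∀ i : I,
      Cardinal.mk ↥(idx ⁻¹' {i}) = Cardinal.mk ↥(idx ⁻¹' {α i}))
    (hfin : ∀ i : I, (idx ⁻¹' {i}).Finite)
    (hsing : ∀ β ∈ S, ∀ i : I, (∃ j k, j ≠ k ∧ β j = i ∧ β k = i) →
      (idx ⁻¹' {i}).Subsingleton) :
    IsUnitRegular idx S := by
  rintro f ⟨β, hβ, hf⟩
  obtain ⟨α, hα, hβαβ⟩ := hSreg β hβ
  choose p hpα hpf using hf.exists_mem_fiber_apply_eq hsurj hβαβ (hsing β hβ)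
  have hpinj : InjOn p (range f) := fun y hy y' hy' h => by
    rw [← hpf y hy, ← hpf y' hy', h]
  have hblock (j : I) : ∃ e : {x // idx x = j} ≃ {x // idx x = α j},
      ∀ x : {x // idx x = j}, x.1 ∈ range f → (e x : X) = p x := by
    have := (hfin j).to_subtype
    obtain ⟨e₀⟩ := Cardinal.eq.1 (hcard α hα j)
    obtain ⟨e, he⟩ := exists_equiv_eqOn_of_injOn e₀ (s := {x | x.1 ∈ range f})
      (p := fun x => ⟨p x, (hpα x).trans (congrArg α x.2)⟩)
      fun x hx y hy h => Subtype.ext (hpinj hx hy (congrArg Subtype.val h))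
    exact ⟨e, fun x hx => congrArg Subtype.val (he hx)⟩
  choose e he using hblock
  obtain ⟨a, rfl⟩ := hα.exists_equiv
  obtain ⟨u, hu, hue⟩ := exists_equiv_isChar_of_fiberwise a e
  refine ⟨u, isUnitTS_of_equiv u hα hu, fun x => ?_⟩
  rw [hue, he _ _ (mem_range_self x), hpf _ (mem_range_self x)]

end

theorem unit_regular_semigroup_iff_general {X I : Type*} (idx : X → I)
    (hsurj : Function.Surjective idx) (S : Set (I → I))
    (hid : (id : I → I) ∈ S) :
    (∀ f, InTS idx S f → ∃ u, IsUnitTS idx S u ∧ ∀ x, f (u (f x)) = f x) ↔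
      ((∀ β ∈ S, ∃ α, IsUnitS S α ∧ ∀ i, β (α (β i)) = β i) ∧
       (∀ α, IsUnitS S α → ∀ i : I,
          Cardinal.mk ↥(idx ⁻¹' {i}) = Cardinal.mk ↥(idx ⁻¹' {α i})) ∧
       (∀ i : I, (idx ⁻¹' {i}).Finite) ∧
       (∀ β ∈ S, ∀ i : I, (∃ j k, j ≠ k ∧ β j = i ∧ β k = i) →
          (idx ⁻¹' {i}).Subsingleton)) := by
  refine ⟨fun hreg => ⟨fun β hβ => ?_, fun α hα => IsUnitRegular.mk_fiber_eq hsurj hreg hα,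
    IsUnitRegular.finite_fiber hsurj hreg hid,
    fun β hβ i => IsUnitRegular.subsingleton_fiber hsurj hreg hβ⟩,
    fun ⟨hSreg, hcard, hfin, hsing⟩ =>
      isUnitRegular_of_fiber_conditions hsurj hSreg hcard hfin hsing⟩
  obtain ⟨α, hα, hβαβ, -⟩ := IsUnitRegular.exists_isUnitS_regular hsurj hreg hβ
  exact ⟨α, hα, hβαβ⟩

theorem unit_regular_semigroup_iff {X I : Type*} (idx : X → I)
    (hsurj : Function.Surjective idx) (S : Set (I → I))
    (hS : ∀ α ∈ S, ∀ β ∈ S, (fun i => β (α i)) ∈ S)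
    (hid : (id : I → I) ∈ S) :
    (∀ f, InTS idx S f → ∃ u, IsUnitTS idx S u ∧ ∀ x, f (u (f x)) = f x) ↔
      ((∀ β ∈ S, ∃ α, IsUnitS S α ∧ ∀ i, β (α (β i)) = β i) ∧
       (∀ α, IsUnitS S α → ∀ i : I,
          Cardinal.mk ↥(idx ⁻¹' {i}) = Cardinal.mk ↥(idx ⁻¹' {α i})) ∧
       (∀ i : I, (idx ⁻¹' {i}).Finite) ∧
       (∀ β ∈ S, ∀ i : I, (∃ j k, j ≠ k ∧ β j = i ∧ β k = i) →
          (idx ⁻¹' {i}).Subsingleton)) :=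
  unit_regular_semigroup_iff_general idx hsurj S hid
end

section
/- Assume id_I ∈ S(I). For f, g ∈ T_{S(I)}(X,P): (f,g) ∈ L (Green's L-relation) in T_{S(I)}(X,P) if and only if there exist α, β ∈ S(I) such that χ^(f) = α χ^(g), χ^(g) = β χ^(f), X_i f ⊆ X_{iα} g for all i ∈ I, and X_i g ⊆ X_{iβ} f for all i ∈ I. -/
open Function Set

/-! `f = h g` (maps acting on the right) holds for some `h` with character `α` exactly when `f`
maps each block `X_i` into `g '' X_{iα}`: given the inclusions, `h` is chosen pointwise, and its
character is `α` by construction. Since every block is nonempty, the inclusions also force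
`χ(f) = α χ(g)`. Applying this to both factorisations gives the `L`-relation. -/

section

variable {X I : Type*} {idx : X → I} {S : Set (I → I)} {f g : X → X}

theorem exists_inTS_comp_eq_iff :
    (∃ h, InTS idx S h ∧ ∀ x, g (h x) = f x) ↔
      ∃ α ∈ S, ∀ i, f '' (idx ⁻¹' {i}) ⊆ g '' (idx ⁻¹' {α i}) := by
  constructor
  · rintro ⟨h, ⟨α, hαS, hα⟩, hgh⟩
    refine ⟨α, hαS, ?_⟩
    rintro _ _ ⟨x, rfl, rfl⟩
    exact ⟨h x, (hα x).symm, hgh x⟩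
  · rintro ⟨α, hαS, hsub⟩
    have hpre : ∀ x, ∃ y, idx y = α (idx x) ∧ g y = f x := fun x =>
      hsub (idx x) ⟨x, rfl, rfl⟩
    choose h hidx hgh using hpre
    exact ⟨h, ⟨α, hαS, fun x => (hidx x).symm⟩, hgh⟩

theorem IsChar.comp_eq_of_image_subset (hsurj : Surjective idx) {cf cg α : I → I}
    (hf : IsChar idx f cf) (hg : IsChar idx g cg)
    (hsub : ∀ i, f '' (idx ⁻¹' {i}) ⊆ g '' (idx ⁻¹' {α i})) (i : I) :
    cg (α i) = cf i := by
  obtain ⟨x, rfl⟩ := hsurj i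
  obtain ⟨y, hy, hgy⟩ := hsub (idx x) ⟨x, rfl, rfl⟩
  rw [← mem_singleton_iff.mp hy, hg, hgy, hf]

theorem exists_inTS_comp_eq_iff_of_isChar (hsurj : Surjective idx) {cf cg : I → I}
    (hf : IsChar idx f cf) (hg : IsChar idx g cg) :
    (∃ h, InTS idx S h ∧ ∀ x, g (h x) = f x) ↔
      ∃ α ∈ S, (∀ i, cg (α i) = cf i) ∧ ∀ i, f '' (idx ⁻¹' {i}) ⊆ g '' (idx ⁻¹' {α i}) := by
  rw [exists_inTS_comp_eq_iff]
  exact exists_congr fun _ => and_congr_right fun _ =>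
    ⟨fun hsub => ⟨hf.comp_eq_of_image_subset hsurj hg hsub, hsub⟩, And.right⟩

end

theorem L_related_iff_general {X I : Type*} (idx : X → I)
    (hsurj : Function.Surjective idx) (S : Set (I → I))
    (f g : X → X) (cf cg : I → I)
    (hf : IsChar idx f cf)
    (hg : IsChar idx g cg) :
    ((∃ h, InTS idx S h ∧ ∀ x, g (h x) = f x) ∧
     (∃ k, InTS idx S k ∧ ∀ x, f (k x) = g x)) ↔
      ∃ α ∈ S, ∃ β ∈ S,
        ((∀ i, cg (α i) = cf i) ∧ (∀ i, cf (β i) = cg i)) ∧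
        ((∀ i : I, f '' (idx ⁻¹' {i}) ⊆ g '' (idx ⁻¹' {α i})) ∧
         (∀ i : I, g '' (idx ⁻¹' {i}) ⊆ f '' (idx ⁻¹' {β i}))) := by
  rw [exists_inTS_comp_eq_iff_of_isChar hsurj hf hg,
    exists_inTS_comp_eq_iff_of_isChar hsurj hg hf]
  constructor
  · rintro ⟨⟨α, hα, hcα, hsubα⟩, β, hβ, hcβ, hsubβ⟩
    exact ⟨α, hα, β, hβ, ⟨hcα, hcβ⟩, hsubα, hsubβ⟩
  · rintro ⟨α, hα, β, hβ, ⟨hcα, hcβ⟩, hsubα, hsubβ⟩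
    exact ⟨⟨α, hα, hcα, hsubα⟩, β, hβ, hcβ, hsubβ⟩

theorem L_related_iff {X I : Type*} (idx : X → I)
    (hsurj : Function.Surjective idx) (S : Set (I → I))
    (hS : ∀ α ∈ S, ∀ β ∈ S, (fun i => β (α i)) ∈ S)
    (hid : (id : I → I) ∈ S)
    (f g : X → X) (cf cg : I → I)
    (hf : IsChar idx f cf) (hcf : cf ∈ S)
    (hg : IsChar idx g cg) (hcg : cg ∈ S) :
    ((∃ h, InTS idx S h ∧ ∀ x, g (h x) = f x) ∧
     (∃ k, InTS idx S k ∧ ∀ x, f (k x) = g x)) ↔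
      ∃ α ∈ S, ∃ β ∈ S,
        ((∀ i, cg (α i) = cf i) ∧ (∀ i, cf (β i) = cg i)) ∧
        ((∀ i : I, f '' (idx ⁻¹' {i}) ⊆ g '' (idx ⁻¹' {α i})) ∧
         (∀ i : I, g '' (idx ⁻¹' {i}) ⊆ f '' (idx ⁻¹' {β i}))) :=
  L_related_iff_general idx hsurj S f g cf cg hf hg
end

section
/- For f, g ∈ T(X,P): (f,g) ∈ L (Green's L-relation) in T(X,P) if and only if for each i ∈ I there exist j, k ∈ I such that X_i f ⊆ X_j g and X_i g ⊆ X_k f. -/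
open Function Set

/- A factorisation `f = hg` in `T(X,P)` (maps acting on the right) forces `h` to carry the block `X_i`
into some block `X_j` with `X_i f ⊆ X_j g`; conversely, given such a `j` for every `i`, choose
for each `x` a preimage under `g` of `f x` inside `X_j`: the resulting `h` maps blocks into
blocks. The `L`-relation is the conjunction of the two one-sided factorisations. -/

theorem exists_presP_comp_eq_iff {X I : Type*} (idx : X → I) (f g : X → X) :
    (∃ h, PresP idx h ∧ ∀ x, g (h x) = f x) ↔
      ∀ i, ∃ j, f '' (idx ⁻¹' {i}) ⊆ g '' (idx ⁻¹' {j}) := by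
  constructor
  · rintro ⟨h, ⟨c, hc⟩, hgh⟩ i
    refine ⟨c i, ?_⟩
    rintro _ ⟨x, rfl, rfl⟩
    exact ⟨h x, (hc x).symm, hgh x⟩
  · intro H
    choose j hj using H
    have hpre : ∀ x, ∃ y, idx y = j (idx x) ∧ g y = f x := fun x =>
      hj (idx x) ⟨x, rfl, rfl⟩
    choose h hblock hgh using hpre
    exact ⟨h, ⟨j, fun x => (hblock x).symm⟩, hgh⟩

theorem L_related_TXP_iff_general {X I : Type*} (idx : X → I)
    (f g : X → X) :
    ((∃ h, PresP idx h ∧ ∀ x, g (h x) = f x) ∧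
     (∃ k, PresP idx k ∧ ∀ x, f (k x) = g x)) ↔
      ∀ i : I, ∃ j k : I, f '' (idx ⁻¹' {i}) ⊆ g '' (idx ⁻¹' {j}) ∧
        g '' (idx ⁻¹' {i}) ⊆ f '' (idx ⁻¹' {k}) := by
  simp only [exists_presP_comp_eq_iff, exists_and_left, exists_and_right, forall_and]

theorem L_related_TXP_iff {X I : Type*} (idx : X → I)
    (hsurj : Function.Surjective idx) (f g : X → X)
    (hfP : PresP idx f) (hgP : PresP idx g) :
    ((∃ h, PresP idx h ∧ ∀ x, g (h x) = f x) ∧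
     (∃ k, PresP idx k ∧ ∀ x, f (k x) = g x)) ↔
      ∀ i : I, ∃ j k : I, f '' (idx ⁻¹' {i}) ⊆ g '' (idx ⁻¹' {j}) ∧
        g '' (idx ⁻¹' {i}) ⊆ f '' (idx ⁻¹' {k}) :=
  L_related_TXP_iff_general idx f g
end

section
/- Assume id_I ∈ S(I). For f, g ∈ T_{S(I)}(X,P): R_f ≤ R_g in T_{S(I)}(X,P) (i.e., f = gh for some h in the monoid) if and only if R_{χ^(f)} ≤ R_{χ^(g)} in S(I) (i.e., χ^(f) = χ^(g) β for some β ∈ S(I) or χ^(f) = χ^(g)) and ker(g) ⊆ ker(f). -/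
open Function Set

/-!
Since `idx` is surjective, a character is unique, so `f = h ∘ g` forces `χ(f) = χ(h) ∘ χ(g)`.
Conversely, if `ker g ⊆ ker f` then `f` factors through `g` on the range of `g`; off that range
the factor may send each block `X_i` into any point of `X_{β i}`, which gives it character `β`.
-/

namespace IsChar

variable {X I : Type*} {idx : X → I}

theorem comp_s17 {g h : X → X} {cg ch : I → I} (hg : IsChar idx g cg) (hh : IsChar idx h ch) :
    IsChar idx (h ∘ g) (ch ∘ cg) := fun x => by
  simp only [comp_apply, hg x, hh (g x)]

theorem eq_of_surjective (hsurj : Surjective idx) {f : X → X} {c c' : I → I}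
    (hc : IsChar idx f c) (hc' : IsChar idx f c') : c = c' :=
  funext <| hsurj.forall.2 fun x => (hc x).trans (hc' x).symm

theorem exists_of_surjective (hsurj : Surjective idx) (β : I → I) : ∃ e, IsChar idx e β :=
  ⟨surjInv hsurj ∘ β ∘ idx, fun _ => (surjInv_eq hsurj _).symm⟩

theorem extend {f g e : X → X} {cf cg β : I → I} (hfg : f.FactorsThrough g)
    (hf : IsChar idx f cf) (hg : IsChar idx g cg) (hβ : ∀ i, β (cg i) = cf i)
    (he : IsChar idx e β) : IsChar idx (Function.extend g f e) β := by
  intro z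
  by_cases hz : ∃ x, g x = z
  · obtain ⟨x, rfl⟩ := hz
    rw [hfg.extend_apply, ← hg, hβ, hf]
  · rw [extend_apply' _ _ _ hz, he]

end IsChar

theorem R_preorder_iff_general {X I : Type*} (idx : X → I)
    (hsurj : Function.Surjective idx) (S : Set (I → I))
    (hid : (id : I → I) ∈ S)
    (f g : X → X) (cf cg : I → I)
    (hf : IsChar idx f cf)
    (hg : IsChar idx g cg) :
    (∃ h, InTS idx S h ∧ ∀ x, h (g x) = f x) ↔
      (((∃ β ∈ S, ∀ i, β (cg i) = cf i) ∨ cf = cg) ∧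
       ∀ x y : X, g x = g y → f x = f y) := by
  constructor
  · rintro ⟨h, ⟨ch, hchS, hch⟩, hhg⟩
    have hfac : h ∘ g = f := funext hhg
    have hcomp : ch ∘ cg = cf := (hfac ▸ hg.comp_s17 hch).eq_of_surjective hsurj hf
    exact ⟨.inl ⟨ch, hchS, congrFun hcomp⟩, fun x y hxy => by rw [← hhg x, ← hhg y, hxy]⟩
  · rintro ⟨hβ, hker⟩
    obtain ⟨β, hβS, hβ⟩ : ∃ β ∈ S, ∀ i, β (cg i) = cf i := by
      rcases hβ with hβ | rfl
      · exact hβ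
      · exact ⟨id, hid, fun _ => rfl⟩
    have hfg : f.FactorsThrough g := fun x y => hker x y
    obtain ⟨e, he⟩ := IsChar.exists_of_surjective hsurj β
    exact ⟨extend g f e, ⟨β, hβS, IsChar.extend hfg hf hg hβ he⟩, hfg.extend_apply e⟩

theorem R_preorder_iff {X I : Type*} (idx : X → I)
    (hsurj : Function.Surjective idx) (S : Set (I → I))
    (hS : ∀ α ∈ S, ∀ β ∈ S, (fun i => β (α i)) ∈ S)
    (hid : (id : I → I) ∈ S)
    (f g : X → X) (cf cg : I → I)
    (hf : IsChar idx f cf) (hcf : cf ∈ S)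
    (hg : IsChar idx g cg) (hcg : cg ∈ S) :
    (∃ h, InTS idx S h ∧ ∀ x, h (g x) = f x) ↔
      (((∃ β ∈ S, ∀ i, β (cg i) = cf i) ∨ cf = cg) ∧
       ∀ x y : X, g x = g y → f x = f y) :=
  R_preorder_iff_general idx hsurj S hid f g cf cg hf hg
end
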